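/- Let φ : ℕ → [1, ∞) be nondecreasing with limsup_n (n+1)^{1/p−1} / φ(n) = ∞, where 0 < p < 1. Then there exists a sequence of functions g_k ∈ H_p(G) with ‖g_k‖_{H_p} ≤ 1 and indices n_k such that ‖S_{n_k} g_k / φ(n_k)‖_{L^{p,∞}} → ∞; consequently sup over f in the unit ball of H_p of sup_n ‖S_n f/φ(n)‖_{L^{p,∞}} is infinite, i.e., the weight (n+1)^{1/p−1} in the maximal operator S̃_p^* cannot be improved. -/

import Mathlib

open MeasureTheory ENNReal Filter
open scoped Classical

noncomputable section

instance : TopologicalSpace (ZMod 2) := ⊥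
instance : DiscreteTopology (ZMod 2) := ⟨rfl⟩
instance : MeasurableSpace (ZMod 2) := ⊤
instance : BorelSpace (ZMod 2) := ⟨borel_eq_top_of_discrete.symm⟩
instance : IsTopologicalAddGroup (ZMod 2) where
  continuous_add := continuous_of_discreteTopology
  continuous_neg := continuous_of_discreteTopology

/-- The dyadic group `G = (ℤ/2)^ℕ`. -/
abbrev G2 : Type := ℕ → ZMod 2

/-- Normalized Haar (probability) measure on `G2`. -/
def muG : Measure G2 :=
  Measure.addHaarMeasure ⟨⟨Set.univ, isCompact_univ⟩, by
    rw [interior_univ]; exact Set.univ_nonempty⟩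

/-- Rademacher functions. -/
def rad (k : ℕ) (x : G2) : ℝ := (-1 : ℝ) ^ ((x k).val)

/-- Walsh–Paley functions. -/
def walsh (n : ℕ) (x : G2) : ℝ :=
  ∏ k ∈ Finset.range n, if n.testBit k then rad k x else 1

/-- Walsh–Dirichlet kernels. -/
def dirichlet (n : ℕ) (x : G2) : ℝ := ∑ k ∈ Finset.range n, walsh k x

/-- The cylinder sets `I_n`. -/
def cyl (n : ℕ) : Set G2 := {x | ∀ i < n, x i = 0}

/-- Walsh–Fourier coefficients. -/
def fhat (f : G2 → ℝ) (k : ℕ) : ℝ := ∫ x, f x * walsh k x ∂muG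

/-- Walsh–Fourier partial sums of a function. -/
def funS (f : G2 → ℝ) (n : ℕ) (x : G2) : ℝ :=
  ∑ k ∈ Finset.range n, fhat f k * walsh k x

/-- Partial sums of the Walsh series of a dyadic martingale given by coefficients `c`. -/
def mS (c : ℕ → ℝ) (n : ℕ) (x : G2) : ℝ := ∑ k ∈ Finset.range n, c k * walsh k x

/-- The martingale maximal function. -/
def mMax (c : ℕ → ℝ) (x : G2) : ℝ≥0∞ := ⨆ n : ℕ, (‖mS c (2 ^ n) x‖₊ : ℝ≥0∞)

/-- The martingale Hardy space quasi-norm `H_p`. -/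
def mHp (p : ℝ) (c : ℕ → ℝ) : ℝ≥0∞ := (∫⁻ x, (mMax c x) ^ p ∂muG) ^ (1 / p)

/-- The maximal function of an integrable function. -/
def funMax (f : G2 → ℝ) (x : G2) : ℝ≥0∞ := ⨆ n : ℕ, (‖funS f (2 ^ n) x‖₊ : ℝ≥0∞)

/-- The Hardy space quasi-norm of an integrable function. -/
def funHp (p : ℝ) (f : G2 → ℝ) : ℝ≥0∞ := (∫⁻ x, (funMax f x) ^ p ∂muG) ^ (1 / p)

/-- Weak `L^p` quasi-norm. -/
def weakLp (p : ℝ) (f : G2 → ℝ) : ℝ≥0∞ :=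
  ⨆ t : NNReal, (t : ℝ≥0∞) * (muG {x | (t : ℝ) < |f x|}) ^ (1 / p)

/-!
The witness is a single dyadic block: the Walsh series with coefficient `a` on `[2^M, 2^(M+1))`
and `0` elsewhere, i.e. `a (D_{2^(M+1)} - D_{2^M})`. Since `D_{2^n} = 2^n 1_{I_n}`, its martingale
maximal function is `a 2^M 1_{I_M}`, so `a = 2^(M(1/p-1))` normalizes its `H_p` quasi-norm to `1`.
Its partial sum of index `2^M + 1` is the single Walsh function `a w_{2^M}`, of weak-`L^p`
quasi-norm `a`. As `φ` is nondecreasing, the limsup hypothesis makes `a / φ(2^M + 1)` unbounded.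
-/

instance : muG.IsAddLeftInvariant := by unfold muG; infer_instance

instance : IsProbabilityMeasure muG := ⟨Measure.addHaarMeasure_self⟩

lemma abs_rad (k : ℕ) (x : G2) : |rad k x| = 1 := by
  simp [rad, abs_pow]

lemma abs_walsh (n : ℕ) (x : G2) : |walsh n x| = 1 := by
  rw [walsh, Finset.abs_prod]
  refine Finset.prod_eq_one fun k _ => ?_
  split_ifs <;> simp [abs_rad]

lemma prod_range_testBit_of_lt_two_pow {M : Type*} [CommMonoid M] (f : ℕ → M) {m N N' : ℕ}
    (hm : m < 2 ^ N) (hN : N ≤ N') :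
    ∏ k ∈ Finset.range N', (if m.testBit k then f k else 1)
      = ∏ k ∈ Finset.range N, (if m.testBit k then f k else 1) := by
  refine (Finset.prod_subset (Finset.range_subset_range.2 hN) fun k _ hk => ?_).symm
  have hk : N ≤ k := by simpa using hk
  rw [Nat.testBit_lt_two_pow (hm.trans_le (Nat.pow_le_pow_right two_pos hk))]
  rfl

lemma walsh_eq_prod_range {m N : ℕ} (hm : m < 2 ^ N) (x : G2) :
    walsh m x = ∏ k ∈ Finset.range N, if m.testBit k then rad k x else 1 := by
  rcases le_total m N with h | h
  · exact (prod_range_testBit_of_lt_two_pow _ Nat.lt_two_pow_self h).symm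
  · exact prod_range_testBit_of_lt_two_pow _ hm h

lemma walsh_two_pow_add {n j : ℕ} (hj : j < 2 ^ n) (x : G2) :
    walsh (2 ^ n + j) x = rad n x * walsh j x := by
  have hlt : 2 ^ n + j < 2 ^ (n + 1) := by rw [pow_succ]; omega
  have htop : (2 ^ n + j).testBit n = true := by
    rw [Nat.testBit_two_pow_add_eq, Nat.testBit_lt_two_pow hj, Bool.not_false]
  rw [walsh_eq_prod_range hlt, walsh_eq_prod_range hj, Finset.prod_range_succ, htop, if_pos rfl,
    mul_comm]
  congr 1
  exact Finset.prod_congr rfl fun k hk => by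
    rw [Nat.testBit_two_pow_add_gt (Finset.mem_range.1 hk)]

lemma dirichlet_two_pow_eq_prod (n : ℕ) (x : G2) :
    dirichlet (2 ^ n) x = ∏ i ∈ Finset.range n, (1 + rad i x) := by
  induction n with
  | zero => simp [dirichlet, walsh]
  | succ n ih =>
    rw [dirichlet, pow_succ, mul_two, Finset.sum_range_add, ← dirichlet, ih,
      Finset.sum_congr rfl fun j hj => walsh_two_pow_add (Finset.mem_range.1 hj) x,
      ← Finset.mul_sum, ← dirichlet, ih, Finset.prod_range_succ]
    ring

lemma one_add_rad (i : ℕ) (x : G2) : 1 + rad i x = if x i = 0 then 2 else 0 := by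
  obtain h | h : x i = 0 ∨ x i = 1 := by generalize x i = b; decide +revert
  · norm_num [rad, h]
  · norm_num [rad, h, ZMod.val_one]

lemma dirichlet_two_pow (n : ℕ) (x : G2) :
    dirichlet (2 ^ n) x = (cyl n).indicator (fun _ => 2 ^ n) x := by
  rw [dirichlet_two_pow_eq_prod]
  by_cases hx : x ∈ cyl n
  · rw [Set.indicator_of_mem hx, Finset.prod_congr rfl fun i hi => by
      rw [one_add_rad, if_pos (hx i (Finset.mem_range.1 hi))], Finset.prod_const,
      Finset.card_range]
  · obtain ⟨i, hi, hxi⟩ : ∃ i < n, x i ≠ 0 := by simpa [cyl] using hx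
    rw [Set.indicator_of_notMem hx]
    exact Finset.prod_eq_zero (Finset.mem_range.2 hi) (by rw [one_add_rad, if_neg hxi])

lemma measurableSet_cyl (n : ℕ) : MeasurableSet (cyl n) := by
  simp only [cyl, Set.ofPred_forall]
  exact .iInter fun i => .iInter fun _ =>
    measurableSet_eq_fun (measurable_pi_apply i) measurable_const

def restrictFin (n : ℕ) : G2 →+ (Fin n → ZMod 2) :=
  { toFun := fun x i => x i, map_zero' := rfl, map_add' := fun _ _ => rfl }

lemma coe_ker_restrictFin (n : ℕ) : ((restrictFin n).ker : Set G2) = cyl n := by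
  ext x
  simp [restrictFin, cyl, funext_iff, Fin.forall_iff]

lemma muG_cyl (n : ℕ) : muG (cyl n) = ((2 : ℝ≥0∞) ^ n)⁻¹ := by
  have hindex : (restrictFin n).ker.index = 2 ^ n := by
    rw [AddSubgroup.index_ker, AddMonoidHom.range_eq_top.2
      Fin.val_injective.surjective_comp_right]
    simp
  have hmeasure := AddSubgroup.index_mul_measure _
    (by rw [coe_ker_restrictFin]; exact measurableSet_cyl n) muG
  rw [hindex, coe_ker_restrictFin, measure_univ, mul_comm] at hmeasure
  exact_mod_cast ENNReal.eq_inv_of_mul_eq_one_left hmeasure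

def dyadicBlock (a : ℝ) (M : ℕ) (j : ℕ) : ℝ :=
  if j ∈ Finset.Ico (2 ^ M) (2 ^ (M + 1)) then a else 0

lemma mS_dyadicBlock (a : ℝ) (M n : ℕ) (x : G2) :
    mS (dyadicBlock a M) n x
      = a * ∑ k ∈ Finset.range n ∩ Finset.Ico (2 ^ M) (2 ^ (M + 1)), walsh k x := by
  simp only [mS, dyadicBlock, ite_mul, zero_mul]
  rw [Finset.sum_ite_mem, Finset.mul_sum]

lemma mS_dyadicBlock_of_le (a : ℝ) {M n : ℕ} (hn : n ≤ 2 ^ M) (x : G2) :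
    mS (dyadicBlock a M) n x = 0 := by
  rw [mS_dyadicBlock, Finset.disjoint_iff_inter_eq_empty.1, Finset.sum_empty, mul_zero]
  exact Finset.disjoint_left.2 fun k hk hk' => by simp at hk hk'; omega

lemma mS_dyadicBlock_two_pow_add_one (a : ℝ) (M : ℕ) (x : G2) :
    mS (dyadicBlock a M) (2 ^ M + 1) x = a * walsh (2 ^ M) x := by
  have hlt : 2 ^ M < 2 ^ (M + 1) := Nat.pow_lt_pow_right one_lt_two (Nat.lt_succ_self M)
  have hinter : Finset.range (2 ^ M + 1) ∩ Finset.Ico (2 ^ M) (2 ^ (M + 1)) = {2 ^ M} := by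
    ext k; simp; omega
  rw [mS_dyadicBlock, hinter, Finset.sum_singleton]

lemma mS_dyadicBlock_of_ge (a : ℝ) {M n : ℕ} (hn : 2 ^ (M + 1) ≤ n) (x : G2) :
    mS (dyadicBlock a M) n x
      = a * (dirichlet (2 ^ (M + 1)) x - dirichlet (2 ^ M) x) := by
  have hle : 2 ^ M ≤ 2 ^ (M + 1) := Nat.pow_le_pow_right two_pos (Nat.le_succ M)
  rw [mS_dyadicBlock, Finset.inter_eq_right.2 fun k hk => by simp at hk ⊢; omega,
    Finset.sum_Ico_eq_sub _ hle, dirichlet, dirichlet]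

lemma abs_dirichlet_two_pow_succ_sub (M : ℕ) (x : G2) :
    |dirichlet (2 ^ (M + 1)) x - dirichlet (2 ^ M) x| = (cyl M).indicator (fun _ => 2 ^ M) x := by
  rw [dirichlet_two_pow, dirichlet_two_pow]
  by_cases hM : x ∈ cyl M
  · have h2 : ((2 : ℝ) ^ (M + 1) - 2 ^ M) = 2 ^ M := by ring
    by_cases hM1 : x ∈ cyl (M + 1) <;> simp [hM, hM1, h2]
  · have hM1 : x ∉ cyl (M + 1) := fun h => hM fun i hi => h i (by omega)
    simp [hM, hM1]

lemma mMax_dyadicBlock {a : ℝ} (ha : 0 ≤ a) (M : ℕ) (x : G2) :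
    mMax (dyadicBlock a M) x = (cyl M).indicator (fun _ => ENNReal.ofReal (a * 2 ^ M)) x := by
  have hfull : (‖a * (dirichlet (2 ^ (M + 1)) x - dirichlet (2 ^ M) x)‖₊ : ℝ≥0∞)
      = (cyl M).indicator (fun _ => ENNReal.ofReal (a * 2 ^ M)) x := by
    rw [← enorm_eq_nnnorm, Real.enorm_eq_ofReal_abs, abs_mul, abs_dirichlet_two_pow_succ_sub,
      abs_of_nonneg ha]
    by_cases hM : x ∈ cyl M <;> simp [hM]
  refine le_antisymm (iSup_le fun m => ?_) ?_
  · rcases le_or_gt m M with h | h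
    · rw [mS_dyadicBlock_of_le a (Nat.pow_le_pow_right two_pos h)]
      simp
    · rw [mS_dyadicBlock_of_ge a (Nat.pow_le_pow_right two_pos h), hfull]
  · rw [← hfull, ← mS_dyadicBlock_of_ge a le_rfl]
    exact le_iSup (fun m => (‖mS (dyadicBlock a M) (2 ^ m) x‖₊ : ℝ≥0∞)) (M + 1)

lemma mHp_dyadicBlock {p : ℝ} (hp : 0 < p) (M : ℕ) :
    mHp p (dyadicBlock (((2 : ℝ) ^ M) ^ (1 / p - 1)) M) = 1 := by
  have hB : (0 : ℝ) < 2 ^ M := by positivity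
  have hheight : ENNReal.ofReal (((2 : ℝ) ^ M) ^ (1 / p - 1) * 2 ^ M) ^ p = 2 ^ M := by
    rw [← Real.rpow_add_one hB.ne', sub_add_cancel,
      ENNReal.ofReal_rpow_of_pos (Real.rpow_pos_of_pos hB _), ← Real.rpow_mul hB.le,
      one_div_mul_cancel hp.ne', Real.rpow_one, ENNReal.ofReal_pow zero_le_two]
    norm_num
  have hpow : ∀ x, mMax (dyadicBlock (((2 : ℝ) ^ M) ^ (1 / p - 1)) M) x ^ p
      = (cyl M).indicator (fun _ => (2 : ℝ≥0∞) ^ M) x := by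
    intro x
    rw [mMax_dyadicBlock (Real.rpow_nonneg hB.le _)]
    by_cases hx : x ∈ cyl M
    · rw [Set.indicator_of_mem hx, Set.indicator_of_mem hx, hheight]
    · simp [hx, ENNReal.zero_rpow_of_pos hp]
  rw [mHp, funext hpow, lintegral_indicator_const (measurableSet_cyl M), muG_cyl,
    ENNReal.mul_inv_cancel (by positivity) (by finiteness), ENNReal.one_rpow]

lemma weakLp_of_abs_eq {p : ℝ} (hp : 0 < p) {f : G2 → ℝ} {a : ℝ} (ha : 0 < a)
    (hf : ∀ x, |f x| = a) : weakLp p f = ENNReal.ofReal a := by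
  have hterm : ∀ t : NNReal, (t : ℝ≥0∞) * muG {x | (t : ℝ) < |f x|} ^ (1 / p)
      = if (t : ℝ) < a then (t : ℝ≥0∞) else 0 := by
    intro t
    by_cases ht : (t : ℝ) < a
    · simp [hf, ht]
    · simp [hf, ht, hp]
  simp only [weakLp, hterm]
  refine le_antisymm (iSup_le fun t => ?_) (le_of_forall_lt fun c hc => ?_)
  · split_ifs with ht
    · exact ENNReal.ofReal_coe_nnreal ▸ ENNReal.ofReal_le_ofReal ht.le
    · exact zero_le
  · obtain ⟨r, hcr, hra⟩ := ENNReal.lt_iff_exists_nnreal_btwn.1 hc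
    have hr : (r : ℝ) < a := by
      rwa [← ENNReal.ofReal_coe_nnreal, ENNReal.ofReal_lt_ofReal_iff ha] at hra
    refine hcr.trans_le (le_iSup_of_le r ?_)
    rw [if_pos hr]

lemma weakLp_mS_dyadicBlock {p : ℝ} (hp : 0 < p) {a : ℝ} (ha : 0 < a) (M : ℕ) :
    weakLp p (mS (dyadicBlock a M) (2 ^ M + 1)) = ENNReal.ofReal a :=
  weakLp_of_abs_eq hp ha fun x => by
    rw [mS_dyadicBlock_two_pow_add_one, abs_mul, abs_walsh, mul_one, abs_of_pos ha]

lemma exists_lt_rpow_two_pow_div {q : ℝ} (hq : 0 ≤ q) {φ : ℕ → ℝ} (hφ0 : ∀ n, 0 < φ n)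
    (hφm : Monotone φ)
    (hφ : atTop.limsup (fun n : ℕ => ENNReal.ofReal (((n : ℝ) + 1) ^ q / φ n)) = ⊤) (C : ℝ) :
    ∃ M : ℕ, C < ((2 : ℝ) ^ M) ^ q / φ (2 ^ M + 1) := by
  have hfreq : ∃ᶠ n : ℕ in atTop,
      ENNReal.ofReal ((4 : ℝ) ^ q * C) < ENNReal.ofReal (((n : ℝ) + 1) ^ q / φ n) :=
    frequently_lt_of_lt_limsup (by isBoundedDefault) (hφ ▸ ENNReal.ofReal_lt_top)
  obtain ⟨m, hm2, hm⟩ := frequently_atTop.1 hfreq 2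
  replace hm := (ENNReal.ofReal_lt_ofReal_iff'.1 hm).1
  -- `m - 1` rather than `m`, so that `2 ^ M + 1 ≤ m` while still `m + 1 ≤ 4 * 2 ^ M`
  set M := Nat.log 2 (m - 1)
  have hlow : 2 ^ M ≤ m - 1 := Nat.pow_log_le_self 2 (by omega)
  have hup : m - 1 < 2 ^ (M + 1) := Nat.lt_pow_succ_log_self one_lt_two _
  have hm4 : (m : ℝ) + 1 ≤ 4 * 2 ^ M := by
    have : m + 1 ≤ 4 * 2 ^ M := by rw [pow_succ] at hup; omega
    exact_mod_cast this
  have h4 : (0 : ℝ) < 4 ^ q := by positivity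
  refine ⟨M, lt_of_mul_lt_mul_left ?_ h4.le⟩
  calc (4 : ℝ) ^ q * C < ((m : ℝ) + 1) ^ q / φ m := hm
    _ ≤ (4 * 2 ^ M) ^ q / φ (2 ^ M + 1) := by
      gcongr
      · exact hφ0 _
      · exact hφm (by omega)
    _ = 4 ^ q * (((2 : ℝ) ^ M) ^ q / φ (2 ^ M + 1)) := by
      rw [Real.mul_rpow (by norm_num) (by positivity), mul_div_assoc]

theorem stmt17 (p : ℝ) (hp : 0 < p) (hp1 : p < 1) (φ : ℕ → ℝ)
    (hφ1 : ∀ n, 1 ≤ φ n) (hφm : Monotone φ)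
    (hφ : Filter.atTop.limsup
        (fun n : ℕ => ENNReal.ofReal (((n : ℝ) + 1) ^ (1 / p - 1) / φ n)) = ⊤) :
    ∃ (g : ℕ → ℕ → ℝ) (nk : ℕ → ℕ),
      (∀ k, mHp p (g k) ≤ 1) ∧
      Tendsto (fun k : ℕ => weakLp p (mS (g k) (nk k)) / ENNReal.ofReal (φ (nk k)))
        atTop (nhds ⊤) := by
  have hq : 0 ≤ 1 / p - 1 := by rw [sub_nonneg, le_div_iff₀ hp, one_mul]; exact hp1.le
  have hφ0 : ∀ n, 0 < φ n := fun n => one_pos.trans_le (hφ1 n)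
  choose M hM using exists_lt_rpow_two_pow_div hq hφ0 hφm hφ
  set a : ℕ → ℝ := fun k => ((2 : ℝ) ^ M k) ^ (1 / p - 1)
  refine ⟨fun k => dyadicBlock (a k) (M k), fun k => 2 ^ M k + 1,
    fun k => (mHp_dyadicBlock hp (M k)).le, tendsto_nhds_top_mono ENNReal.tendsto_nat_nhds_top ?_⟩
  refine Eventually.of_forall fun k => ?_
  dsimp only
  rw [weakLp_mS_dyadicBlock hp (by positivity), ← ENNReal.ofReal_div_of_pos (hφ0 _),
    ← ENNReal.ofReal_natCast]
  exact ENNReal.ofReal_le_ofReal (hM k).le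

end
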